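/- arXiv:2006.15299 — 5 statements merged into one kernel-verified Lean document; each statement's English description precedes it below -/
import Mathlib

section
/- Let 0 ≤ α < 1 and define h(r) = r·exp((1-α)·∫₀^r (e^t - 1)/t dt) for r ∈ (-1, 1) (extended continuously to r = -1). If 0 ≤ α < 0.05284, then h(1/3) + h(-1) > 0, i.e. h(1/3) > exp((1-α)·∫₀^{-1} (e^t - 1)/t dt). -/
open MeasureTheory Real Finset

noncomputable def myc : ℕ → ℝ := fun k => if k = 10 then -(12 / (39916800 * 11)) else ((k+1).factorial : ℝ)⁻¹

-- pointwise lower bound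
lemma key_pt (t : ℝ) (ht0 : t ≠ 0) (ht1 : |t| ≤ 1) :
    ∑ k ∈ range 11, myc k * t ^ k ≤ (Real.exp t - 1) / t := by
  have hb := Real.exp_bound ht1 (n := 11) (by norm_num)
  have hS : ∑ m ∈ range 11, t ^ m / (m.factorial : ℝ) =
      1 + t * ∑ k ∈ range 11, myc k * t ^ k + (12 / (39916800 * 11)) * t ^ 11 := by
    simp [Finset.sum_range_succ, myc, Nat.factorial]
    ring
  rw [hS] at hb
  have heq : (Real.exp t - 1) / t - ∑ k ∈ range 11, myc k * t ^ k =
      (Real.exp t - (1 + t * ∑ k ∈ range 11, myc k * t ^ k + (12 / (39916800 * 11)) * t ^ 11)) / t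
        + (12 / (39916800 * 11)) * t ^ 10 := by
    field_simp
    ring
  have habs : |(Real.exp t - (1 + t * ∑ k ∈ range 11, myc k * t ^ k
      + (12 / (39916800 * 11)) * t ^ 11)) / t| ≤ (12 / (39916800 * 11)) * t ^ 10 := by
    rw [abs_div]
    rw [div_le_iff₀ (abs_pos.mpr ht0)]
    calc |Real.exp t - (1 + t * ∑ k ∈ range 11, myc k * t ^ k + (12 / (39916800 * 11)) * t ^ 11)|
        ≤ |t| ^ 11 * (((11:ℕ).succ : ℝ) / ((11:ℕ).factorial * 11)) := hb
      _ = (12 / (39916800 * 11)) * t ^ 10 * |t| := by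
          rw [show ((11:ℕ).succ : ℝ) = 12 by norm_num,
            show (((11:ℕ).factorial : ℝ)) = 39916800 by norm_num [Nat.factorial]]
          have h10 : |t| ^ 11 = t ^ 10 * |t| := by
            rw [pow_succ]; congr 1
            rw [← abs_pow, abs_of_nonneg (by positivity : (0:ℝ) ≤ t ^ 10)]
          rw [h10]
          ring
  have h2 := neg_abs_le ((Real.exp t - (1 + t * ∑ k ∈ range 11, myc k * t ^ k
      + (12 / (39916800 * 11)) * t ^ 11)) / t)
  linarith [heq, habs, h2]

lemma f_int (a b : ℝ) (h : Set.uIoc a b ⊆ Set.Icc (-1:ℝ) 1) :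
    IntervalIntegrable (fun t => (Real.exp t - 1) / t) volume a b := by
  rw [intervalIntegrable_iff]
  haveI : IsFiniteMeasure (volume.restrict (Set.uIoc a b)) :=
    ⟨by rw [Measure.restrict_apply_univ]; exact measure_Ioc_lt_top⟩
  apply Integrable.mono' (integrable_const (2:ℝ))
  · exact ((Real.measurable_exp.sub measurable_const).div measurable_id).aestronglyMeasurable
  · filter_upwards [ae_restrict_mem measurableSet_uIoc] with t ht
    rcases eq_or_ne t 0 with rfl | ht0
    · simp
    · have htm := h ht
      have ht1 : |t| ≤ 1 := abs_le.mpr ⟨htm.1, htm.2⟩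
      have hb := Real.abs_exp_sub_one_le ht1
      rw [Real.norm_eq_abs, abs_div, div_le_iff₀ (abs_pos.mpr ht0)]
      linarith

lemma g_integral : ∫ t in (-1:ℝ)..(1/3), ∑ k ∈ range 11, myc k * t ^ k
    = 8683704381991549 / 7486570925064000 := by
  rw [intervalIntegral.integral_finset_sum]
  · norm_num [intervalIntegral.integral_const_mul, integral_pow, integral_id, intervalIntegral.integral_div, Finset.sum_range_succ, myc,
      Nat.factorial]
    rw [intervalIntegral.integral_const_mul, integral_id]
    norm_num
  · intro k _
    exact ((continuous_const.mul (continuous_pow k)).intervalIntegrable _ _)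

theorem stmt_0 (α : ℝ) (h0 : 0 ≤ α) (h1 : α < 0.05284) :
    (1/3) * Real.exp ((1 - α) * ∫ t in (0:ℝ)..(1/3), (Real.exp t - 1) / t) >
      Real.exp ((1 - α) * ∫ t in (0:ℝ)..(-1), (Real.exp t - 1) / t) := by
  have hi1 : IntervalIntegrable (fun t => (Real.exp t - 1) / t) volume (-1) 0 := by
    apply f_int; intro t ht; rw [Set.uIoc_of_le (by norm_num : (-1:ℝ) ≤ 0)] at ht
    exact ⟨le_of_lt ht.1, by linarith [ht.2]⟩
  have hi2 : IntervalIntegrable (fun t => (Real.exp t - 1) / t) volume 0 (1/3) := by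
    apply f_int; intro t ht; rw [Set.uIoc_of_le (by norm_num : (0:ℝ) ≤ 1/3)] at ht
    exact ⟨by linarith [ht.1], by linarith [ht.2]⟩
  have hi3 : IntervalIntegrable (fun t => (Real.exp t - 1) / t) volume (-1) (1/3) :=
    hi1.trans hi2
  have hg : IntervalIntegrable (fun t => ∑ k ∈ range 11, myc k * t ^ k) volume (-1) (1/3) := by
    apply Continuous.intervalIntegrable
    exact continuous_finset_sum _ (fun k _ => continuous_const.mul (continuous_pow k))
  have hmono : (8683704381991549:ℝ)/7486570925064000
      ≤ ∫ t in (-1:ℝ)..(1/3), (Real.exp t - 1) / t := by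
    rw [← g_integral]
    apply intervalIntegral.integral_mono_ae_restrict (by norm_num) hg hi3
    have h0 : ∀ᵐ (t:ℝ) ∂(volume.restrict (Set.Icc (-1:ℝ) (1/3))), t ≠ 0 := by
      apply ae_restrict_of_ae
      rw [ae_iff]
      simp only [ne_eq, not_not]
      have : {a : ℝ | a = 0} = {0} := by ext; simp
      rw [this]; exact measure_singleton 0
    filter_upwards [h0, ae_restrict_mem measurableSet_Icc] with t ht0 htm
    exact key_pt t ht0 (abs_le.mpr ⟨htm.1, by linarith [htm.2]⟩)
  set A := ∫ t in (0:ℝ)..(1/3), (Real.exp t - 1) / t with hA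
  set B := ∫ t in (0:ℝ)..(-1), (Real.exp t - 1) / t with hB
  have hsplit : ∫ t in (-1:ℝ)..(1/3), (Real.exp t - 1) / t = A - B := by
    have hadj := intervalIntegral.integral_add_adjacent_intervals hi1 hi2
    have hsym : (∫ t in (0:ℝ)..(-1), (Real.exp t - 1) / t)
        = -∫ t in (-1:ℝ)..0, (Real.exp t - 1) / t := intervalIntegral.integral_symm _ _
    rw [hA, hB, hsym, ← hadj]; ring
  rw [hsplit] at hmono
  have hq : (7615608743006588473:ℝ)/6932010115800000000 ≤ (1-α) * (A - B) := by
    have h1a : (0.94716:ℝ) ≤ 1 - α := by norm_num at h1 ⊢; linarith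
    calc (7615608743006588473:ℝ)/6932010115800000000
        = 0.94716 * (8683704381991549/7486570925064000) := by norm_num
      _ ≤ (1-α) * (A-B) := mul_le_mul h1a hmono (by norm_num) (by linarith)
  have h3 : (3:ℝ) < Real.exp ((1-α)*(A-B)) := by
    have hs : (3:ℝ) < ∑ i ∈ range 12,
        ((7615608743006588473:ℝ)/6932010115800000000)^i / i.factorial := by
      norm_num [Finset.sum_range_succ, Nat.factorial]
    calc (3:ℝ) < ∑ i ∈ range 12,
          ((7615608743006588473:ℝ)/6932010115800000000)^i / i.factorial := hs
      _ ≤ Real.exp ((7615608743006588473:ℝ)/6932010115800000000) :=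
          Real.sum_le_exp_of_nonneg (by norm_num) 12
      _ ≤ Real.exp ((1-α)*(A-B)) := Real.exp_le_exp.mpr hq
  have hexp : Real.exp ((1-α)*A) = Real.exp ((1-α)*(A-B)) * Real.exp ((1-α)*B) := by
    rw [← Real.exp_add]; ring_nf
  rw [gt_iff_lt, hexp]
  nlinarith [Real.exp_pos ((1-α)*B), h3]
end

section
/- Let 0 < α < 1 and define h(r) = r·((1 + √α·r)/(1 - √α·r))^{1/(2√α)} for r ∈ (-1, 1]. Then h(1/3) + h(-1) > 0, i.e. (1/3)·((1 + √α/3)/(1 - √α/3))^{1/(2√α)} > ((1 - √α)/(1 + √α))^{1/(2√α)}. -/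
open Real

lemma sinh_le_mul_cosh {x : ℝ} (hx : 0 ≤ x) : Real.sinh x ≤ x * Real.cosh x := by
  have key : MonotoneOn (fun x : ℝ => x * Real.cosh x - Real.sinh x) (Set.Ici 0) := by
    apply monotoneOn_of_deriv_nonneg (convex_Ici 0)
    · fun_prop
    · apply Differentiable.differentiableOn
      fun_prop
    · intro x hx
      have hd : HasDerivAt (fun x : ℝ => x * Real.cosh x - Real.sinh x)
          (1 * Real.cosh x + x * Real.sinh x - Real.cosh x) x := by
        exact ((hasDerivAt_id x).mul (Real.hasDerivAt_cosh x)).sub (Real.hasDerivAt_sinh x)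
      rw [hd.deriv]
      have hx' : 0 < x := by simpa using hx
      nlinarith [Real.sinh_pos_iff.mpr hx', hx'.le]
  have h0 := key (Set.self_mem_Ici) (by exact hx) hx
  simp at h0
  linarith

lemma exp_two_mul_le {s : ℝ} (hs0 : 0 ≤ s) (hs1 : s < 1) :
    Real.exp (2 * s) * (1 - s) ≤ 1 + s := by
  have h := sinh_le_mul_cosh hs0
  rw [Real.sinh_eq, Real.cosh_eq] at h
  have h1 : Real.exp s * Real.exp (-s) = 1 := by
    rw [← Real.exp_add]; simp
  have h2 : Real.exp (2 * s) = Real.exp s * Real.exp s := by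
    rw [← Real.exp_add]; ring_nf
  nlinarith [Real.exp_pos s, Real.exp_pos (-s)]

lemma two_mul_le_log {s : ℝ} (hs0 : 0 ≤ s) (hs1 : s < 1) :
    2 * s ≤ Real.log ((1 + s) / (1 - s)) := by
  rw [Real.le_log_iff_exp_le (div_pos (by linarith) (by linarith))]
  rw [le_div_iff₀ (by linarith)]
  exact exp_two_mul_le hs0 hs1

theorem stmt_4 (α : ℝ) (h0 : 0 < α) (h1 : α < 1) :
    (1/3) * ((1 + Real.sqrt α / 3) / (1 - Real.sqrt α / 3)) ^ (1 / (2 * Real.sqrt α))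
      > ((1 - Real.sqrt α) / (1 + Real.sqrt α)) ^ (1 / (2 * Real.sqrt α)) := by
  set s := Real.sqrt α with hs
  have hs0 : 0 < s := Real.sqrt_pos.mpr h0
  have hs1 : s < 1 := by
    rw [hs, show (1:ℝ) = Real.sqrt 1 by simp]
    exact Real.sqrt_lt_sqrt h0.le h1
  have hbR : (0:ℝ) < (1 - s) / (1 + s) := div_pos (by linarith) (by linarith)
  have hbL : (0:ℝ) < (1 + s/3) / (1 - s/3) := by
    apply div_pos <;> linarith
  -- RHS bound
  have hlogR : Real.log ((1 - s) / (1 + s)) ≤ -(2 * s) := by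
    have := two_mul_le_log hs0.le hs1
    have heq : (1 - s) / (1 + s) = ((1 + s) / (1 - s))⁻¹ := by
      rw [inv_div]
    rw [heq, Real.log_inv]
    linarith
  have hR : ((1 - s) / (1 + s)) ^ (1 / (2 * s)) ≤ Real.exp (-1) := by
    rw [Real.rpow_def_of_pos hbR]
    have h2s : (0:ℝ) < 1 / (2 * s) := by positivity
    have hkey : Real.log ((1 - s) / (1 + s)) * (1 / (2 * s)) ≤ -1 := by
      calc Real.log ((1 - s) / (1 + s)) * (1 / (2 * s))
          ≤ -(2 * s) * (1 / (2 * s)) := mul_le_mul_of_nonneg_right hlogR h2s.le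
        _ = -1 := by field_simp
    exact Real.exp_le_exp.mpr hkey
  -- LHS bound
  have hlogL : 2 * (s / 3) ≤ Real.log ((1 + s/3) / (1 - s/3)) := by
    exact two_mul_le_log (by positivity) (by linarith)
  have hL : Real.exp (1/3) ≤ ((1 + s/3) / (1 - s/3)) ^ (1 / (2 * s)) := by
    rw [Real.rpow_def_of_pos hbL]
    apply Real.exp_le_exp.mpr
    calc (1/3 : ℝ) = 2 * (s/3) * (1 / (2 * s)) := by field_simp
      _ ≤ Real.log ((1 + s/3) / (1 - s/3)) * (1 / (2 * s)) := by
          apply mul_le_mul_of_nonneg_right hlogL (by positivity)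
  -- numeric: (1/3) exp(1/3) > exp(-1)
  have hnum : Real.exp (-1) < (1/3) * Real.exp (1/3) := by
    have he1 : (2.7182818283 : ℝ) < Real.exp 1 := Real.exp_one_gt_d9
    have he3 : (1 + 1/3 : ℝ) ≤ Real.exp (1/3) := by
      have := Real.add_one_le_exp (1/3 : ℝ); linarith
    have hprod : Real.exp (-1) * Real.exp 1 = 1 := by
      rw [← Real.exp_add]; simp
    nlinarith [Real.exp_pos (-1), Real.exp_pos (1/3)]
  calc ((1 - s) / (1 + s)) ^ (1 / (2 * s)) ≤ Real.exp (-1) := hR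
    _ < (1/3) * Real.exp (1/3) := hnum
    _ ≤ (1/3) * ((1 + s/3) / (1 - s/3)) ^ (1 / (2 * s)) := by linarith
end

section
/- Let 0.444981 < s ≤ 1/√2 and define h(r) = r·exp(2sr + s²r²/2). Then h(1/3) + h(-1) > 0, i.e. (1/3)·exp(s(s+12)/18) > exp(-2s + s²/2). -/
open Finset in
lemma log_three_lt : Real.log 3 < 1.0986123 := by
  have h := Real.abs_log_sub_add_sum_range_le (x := 1/3) (by rw [abs_of_pos] <;> norm_num) 18
  have h2 : Real.log (1 - 1/3 : ℝ) = Real.log 2 - Real.log 3 := by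
    rw [show (1 - 1/3 : ℝ) = 2/3 by norm_num, Real.log_div (by norm_num) (by norm_num)]
  rw [h2, abs_le] at h
  have hlog2 : Real.log 2 < 0.6931471808 := Real.log_two_lt_d9
  have hS : (∑ i ∈ range 18, (1/3:ℝ) ^ (i + 1) / (i + 1)) = 54989975121893 / 135621966061296 := by
    norm_num [Finset.sum_range_succ]
  rw [hS, show |(1/3:ℝ)| = 1/3 from abs_of_pos (by norm_num)] at h
  norm_num at h ⊢
  linarith [h.1, h.2]

theorem stmt_5 (s : ℝ) (h0 : 0.444981 < s) (h1 : s ≤ 1 / Real.sqrt 2) :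
    (1/3) * Real.exp (s * (s + 12) / 18) > Real.exp (-2 * s + s^2 / 2) := by
  have h14 : (1.414:ℝ) ≤ Real.sqrt 2 := by
    nlinarith [Real.sq_sqrt (by norm_num : (0:ℝ) ≤ 2), Real.sqrt_nonneg 2]
  have hs2 : s ≤ 0.70722 := by
    have : (1:ℝ) / Real.sqrt 2 ≤ 1 / 1.414 := by
      apply one_div_le_one_div_of_le (by norm_num) h14
    nlinarith
  have key : Real.exp (-2 * s + s^2 / 2) < Real.exp (s * (s + 12) / 18 - Real.log 3) := by
    apply Real.exp_lt_exp.mpr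
    have hlog := log_three_lt
    nlinarith [mul_nonneg (sub_nonneg.mpr h0.le) (sub_nonneg.mpr hs2)]
  calc Real.exp (-2 * s + s^2 / 2) < Real.exp (s * (s + 12) / 18 - Real.log 3) := key
    _ = (1/3) * Real.exp (s * (s + 12) / 18) := by
        rw [Real.exp_sub, Real.exp_log (by norm_num)]
        ring
end

section
/- Let 0 ≤ α < 1 and let G(z) = ((1-z)/(1+z))^{2(1-α)} for z in the unit disk, with Taylor expansion G(z) = 1 + Σ_{n≥1} d_n z^n. Then for |z| = r with r = (2^{1/(2(1-α))} - 1)/(2^{1/(2(1-α))} + 1), one has Σ_{n≥1} |d_n| r^n ≥ ((1+r)/(1-r))^{2(1-α)} - 1 = 1. -/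
/-!
Evaluating the expansion of `G` at `z = -r` gives `1 + ∑ dₙ (-r)ⁿ = ((1 + r) / (1 - r)) ^ (2(1-α))`,
and the triangle inequality bounds `|∑ dₙ (-r)ⁿ|` by the majorant series `∑ |dₙ| rⁿ`. The radius `r`
is the inverse Möbius image `(t - 1) / (t + 1)` of `t = 2 ^ (1 / (2(1-α)))`, so that
`((1 + r) / (1 - r)) ^ (2(1-α)) = t ^ (2(1-α)) = 2`.
-/

/-- In finite dimension a series is summable iff it is absolutely summable; if not, both sides
are `0`. -/
theorem norm_tsum_le_tsum_norm_of_finiteDimensional {ι E : Type*} [NormedAddCommGroup E]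
    [NormedSpace ℝ E] [FiniteDimensional ℝ E] (f : ι → E) : ‖∑' i, f i‖ ≤ ∑' i, ‖f i‖ := by
  by_cases hf : Summable fun i => ‖f i‖
  · exact norm_tsum_le_tsum_norm hf
  · rw [tsum_eq_zero_of_not_summable hf,
      tsum_eq_zero_of_not_summable (summable_norm_iff.not.mp hf), norm_zero]

theorem one_add_div_one_sub_of_eq_sub_one_div_add_one {t r : ℝ} (ht : t + 1 ≠ 0)
    (hr : r = (t - 1) / (t + 1)) : (1 + r) / (1 - r) = t := by
  subst hr
  field_simp
  ring

theorem mem_Ico_of_eq_sub_one_div_add_one {t r : ℝ} (ht : 1 ≤ t) (hr : r = (t - 1) / (t + 1)) :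
    r ∈ Set.Ico 0 1 := by
  subst hr
  constructor
  · apply div_nonneg <;> linarith
  · rw [div_lt_one (by linarith)]
    linarith

theorem stmt_10_general (α : ℝ) (h1 : α < 1) (d : ℕ → ℂ)
    (hd : ∀ z ∈ Metric.ball (0:ℂ) 1,
      (1 + ∑' n : ℕ, d (n+1) * z ^ (n+1)) = ((1 - z) / (1 + z)) ^ ((2:ℂ) * (1 - (α:ℂ))))
    (r : ℝ)
    (hr : r = ((2:ℝ) ^ (1 / (2 * (1 - α))) - 1) / ((2:ℝ) ^ (1 / (2 * (1 - α))) + 1)) :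
    (∑' n : ℕ, ‖d (n+1)‖ * r ^ (n+1)) ≥ ((1+r)/(1-r)) ^ (2*(1-α)) - 1 ∧
      ((1+r)/(1-r)) ^ (2*(1-α)) - 1 = 1 := by
  have hβ : 0 < 2 * (1 - α) := by linarith
  have ht : 1 ≤ (2:ℝ) ^ (1 / (2 * (1 - α))) := Real.one_le_rpow one_le_two (by positivity)
  obtain ⟨hr0, hr1⟩ := mem_Ico_of_eq_sub_one_div_add_one ht hr
  have hG : ((1 + r) / (1 - r)) ^ (2 * (1 - α)) = 2 := by
    rw [one_add_div_one_sub_of_eq_sub_one_div_add_one (by linarith) hr, one_div,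
      Real.rpow_inv_rpow zero_le_two hβ.ne']
  refine ⟨?_, by rw [hG]; norm_num⟩
  have hval : 1 + ∑' n : ℕ, d (n+1) * (-(r:ℂ)) ^ (n+1) = 2 := by
    have hz : -(r:ℂ) ∈ Metric.ball (0:ℂ) 1 := by simp [abs_of_nonneg hr0, hr1]
    have hcast : (1 - -(r:ℂ)) / (1 + -(r:ℂ)) = (((1 + r) / (1 - r) : ℝ) : ℂ) := by push_cast; ring
    rw [hd _ hz, hcast, ← Complex.ofReal_ofNat, ← Complex.ofReal_one, ← Complex.ofReal_sub,
      ← Complex.ofReal_mul, ← Complex.ofReal_cpow (div_nonneg (by linarith) (by linarith)), hG]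
  calc ((1 + r) / (1 - r)) ^ (2 * (1 - α)) - 1
      = ‖∑' n : ℕ, d (n+1) * (-(r:ℂ)) ^ (n+1)‖ := by
        rw [hG, eq_sub_of_add_eq' hval]; norm_num
    _ ≤ ∑' n : ℕ, ‖d (n+1) * (-(r:ℂ)) ^ (n+1)‖ := norm_tsum_le_tsum_norm_of_finiteDimensional _
    _ = ∑' n : ℕ, ‖d (n+1)‖ * r ^ (n+1) := by simp [abs_of_nonneg hr0]

theorem stmt_10 (α : ℝ) (h0 : 0 ≤ α) (h1 : α < 1) (d : ℕ → ℂ)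
    (hd : ∀ z ∈ Metric.ball (0:ℂ) 1,
      (1 + ∑' n : ℕ, d (n+1) * z ^ (n+1)) = ((1 - z) / (1 + z)) ^ ((2:ℂ) * (1 - (α:ℂ))))
    (r : ℝ)
    (hr : r = ((2:ℝ) ^ (1 / (2 * (1 - α))) - 1) / ((2:ℝ) ^ (1 / (2 * (1 - α))) + 1)) :
    (∑' n : ℕ, ‖d (n+1)‖ * r ^ (n+1)) ≥ ((1+r)/(1-r)) ^ (2*(1-α)) - 1 ∧
      ((1+r)/(1-r)) ^ (2*(1-α)) - 1 = 1 :=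
  stmt_10_general α h1 d hd r hr
end

section
/- Let f and g be analytic on the unit disk with f(z) = Σ a_n z^n, g(z) = Σ c_n z^n, and suppose g is subordinate to f (g = f ∘ ω for some analytic ω : 𝔻 → 𝔻 with ω(0) = 0). Then for 0 ≤ r ≤ 1/3, Σ_{n≥0} |c_n| r^n ≤ Σ_{n≥0} |a_n| r^n. -/
/-!
Bohr's inequality: if `ψ = ∑ bₙ zⁿ` maps the unit disk into the closed unit disk, then
`∑ |bₙ| rⁿ ≤ 1` for `r ≤ 1/3`. It follows from Wiener's estimate `|bₘ| ≤ 1 - |b₀|²`, which is the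
Schwarz–Pick inequality at `0` applied to `w ↦ ∑ b_{mt} wᵗ`; on `w = zᵐ` this function is the
average of `ψ` over the rotations of `z` by the `m`-th roots of unity.

By the Schwarz lemma `ω(z) = z u(z)` with `|u| ≤ 1`, so Bohr's inequality for `uᵏ` bounds the
majorant series of `ωᵏ = zᵏ uᵏ` by `rᵏ`. Expanding `g = ∑ aₖ ωᵏ` as an absolutely convergent double
series identifies `cₙ` with `∑ₖ aₖ [zⁿ] ωᵏ`, and summing the majorants over `k` gives the claim.
-/

open Complex Metric Set Finset ComplexConjugate
open scoped NNReal Topology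

def HasCoeffsOnBall (ψ : ℂ → ℂ) (b : ℕ → ℂ) (ρ : ℝ) : Prop :=
  ∀ z ∈ ball (0 : ℂ) ρ, HasSum (fun n => b n * z ^ n) (ψ z)

namespace HasCoeffsOnBall

variable {ψ : ℂ → ℂ} {b : ℕ → ℂ} {ρ : ℝ}

theorem mono {ρ' : ℝ} (h : HasCoeffsOnBall ψ b ρ) (hρ : ρ' ≤ ρ) : HasCoeffsOnBall ψ b ρ' :=
  fun z hz => h z (ball_subset_ball hρ hz)

theorem congr {φ : ℂ → ℂ} (h : HasCoeffsOnBall ψ b ρ) (hφ : EqOn φ ψ (ball 0 ρ)) :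
    HasCoeffsOnBall φ b ρ :=
  fun z hz => hφ hz ▸ h z hz

theorem coeff_zero (h : HasCoeffsOnBall ψ b ρ) (hρ : 0 < ρ) : b 0 = ψ 0 := by
  simpa using ((h 0 (mem_ball_self hρ)).unique (hasSum_single 0 fun n hn => by simp [hn])).symm

theorem le_radius (h : HasCoeffsOnBall ψ b ρ) :
    ENNReal.ofReal ρ ≤ (FormalMultilinearSeries.ofScalars ℂ b).radius := by
  refine ENNReal.le_of_forall_nnreal_lt fun r hr => ?_
  have hr' : ((r : ℝ) : ℂ) ∈ ball (0 : ℂ) ρ := by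
    simpa [abs_of_nonneg r.coe_nonneg] using (ENNReal.coe_lt_ofReal).1 hr
  refine FormalMultilinearSeries.le_radius_of_tendsto _ (l := 0) ?_
  simpa [FormalMultilinearSeries.ofScalars_norm, abs_of_nonneg r.coe_nonneg]
    using (h _ hr').summable.tendsto_atTop_zero.norm

theorem summable_norm_mul_pow (h : HasCoeffsOnBall ψ b ρ) {r : ℝ} (hr0 : 0 ≤ r) (hr : r < ρ) :
    Summable fun n => ‖b n‖ * r ^ n := by
  lift r to ℝ≥0 using hr0
  have := (FormalMultilinearSeries.ofScalars ℂ b).summable_norm_mul_pow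
    (h.le_radius.trans_lt' (by simpa using hr))
  simpa [FormalMultilinearSeries.ofScalars_norm] using this

theorem hasFPowerSeriesOnBall (h : HasCoeffsOnBall ψ b ρ) (hρ : 0 < ρ) :
    HasFPowerSeriesOnBall ψ (FormalMultilinearSeries.ofScalars ℂ b) 0 (ENNReal.ofReal ρ) where
  r_le := h.le_radius
  r_pos := by simpa using hρ
  hasSum {y} hy := by
    have hy' : y ∈ ball (0 : ℂ) ρ := by
      rwa [Metric.eball_ofReal] at hy
    simpa [FormalMultilinearSeries.ofScalars_apply_eq, mul_comm] using h y hy'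

theorem differentiableOn (h : HasCoeffsOnBall ψ b ρ) : DifferentiableOn ℂ ψ (ball 0 ρ) := by
  rcases le_or_gt ρ 0 with hρ | hρ
  · simp [ball_eq_empty.2 hρ, differentiableOn_empty]
  · simpa [Metric.eball_ofReal] using (h.hasFPowerSeriesOnBall hρ).differentiableOn

theorem coeff_one (h : HasCoeffsOnBall ψ b ρ) (hρ : 0 < ρ) : b 1 = deriv ψ 0 := by
  simp [(h.hasFPowerSeriesOnBall hρ).hasFPowerSeriesAt.deriv]

theorem unique {b' : ℕ → ℂ} {ρ' : ℝ} (h : HasCoeffsOnBall ψ b ρ) (h' : HasCoeffsOnBall ψ b' ρ')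
    (hρ : 0 < ρ) (hρ' : 0 < ρ') : b = b' :=
  FormalMultilinearSeries.ofScalars_series_injective ℂ (E := ℂ) <|
    (h.hasFPowerSeriesOnBall hρ).hasFPowerSeriesAt.eq_formalMultilinearSeries
      (h'.hasFPowerSeriesOnBall hρ').hasFPowerSeriesAt

end HasCoeffsOnBall

theorem DifferentiableOn.hasCoeffsOnBall {ψ : ℂ → ℂ} {ρ : ℝ}
    (h : DifferentiableOn ℂ ψ (ball 0 ρ)) :
    HasCoeffsOnBall ψ (fun n => (n.factorial : ℂ)⁻¹ * iteratedDeriv n ψ 0) ρ := fun z hz => by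
  simpa [smul_eq_mul, mul_comm, mul_left_comm] using Complex.hasSum_taylorSeries_on_ball h hz

noncomputable def mobius (a w : ℂ) : ℂ := (w - a) / (1 - conj a * w)

theorem sq_norm_one_sub_conj_mul_sub_sq_norm_sub (a w : ℂ) :
    ‖1 - conj a * w‖ ^ 2 - ‖w - a‖ ^ 2 = (1 - ‖a‖ ^ 2) * (1 - ‖w‖ ^ 2) := by
  simp only [Complex.sq_norm, normSq_apply, mul_re, mul_im, sub_re, sub_im, one_re, one_im,
    conj_re, conj_im]
  ring

theorem norm_mobius_lt_one {a w : ℂ} (ha : ‖a‖ < 1) (hw : ‖w‖ < 1) : ‖mobius a w‖ < 1 := by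
  have key := sq_norm_one_sub_conj_mul_sub_sq_norm_sub a w
  have hpos : 0 < (1 - ‖a‖ ^ 2) * (1 - ‖w‖ ^ 2) := by
    apply mul_pos <;> nlinarith [norm_nonneg a, norm_nonneg w]
  have hlt : ‖w - a‖ < ‖1 - conj a * w‖ := by
    apply lt_of_pow_lt_pow_left₀ 2 (norm_nonneg _); linarith
  rw [mobius, norm_div, div_lt_one ((norm_nonneg _).trans_lt hlt)]
  exact hlt

theorem mobius_self (a : ℂ) : mobius a a = 0 := by simp [mobius]

theorem differentiableOn_mobius {a : ℂ} (ha : ‖a‖ < 1) :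
    DifferentiableOn ℂ (mobius a) (ball 0 1) := by
  refine (differentiableOn_id.sub_const a).div ((differentiableOn_id.const_mul _).const_sub 1)
    fun w hw h => ?_
  have : ‖conj a * w‖ < 1 := by
    rw [norm_mul, RCLike.norm_conj]
    exact mul_lt_one_of_nonneg_of_lt_one_left (norm_nonneg _) ha (mem_ball_zero_iff.1 hw).le
  rw [← sub_eq_zero.1 h, norm_one] at this
  exact this.false

theorem hasDerivAt_mobius {a : ℂ} (ha : ‖a‖ < 1) :
    HasDerivAt (mobius a) (1 - ‖a‖ ^ 2 : ℂ)⁻¹ a := by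
  have hconj : conj a * a = (‖a‖ ^ 2 : ℂ) := by
    rw [mul_comm, mul_conj, ← Complex.sq_norm]; push_cast; ring
  have hne : (1 : ℂ) - ‖a‖ ^ 2 ≠ 0 := by
    exact_mod_cast (by nlinarith [norm_nonneg a] : (1 : ℝ) - ‖a‖ ^ 2 ≠ 0)
  refine (((hasDerivAt_id' a).sub_const a).div
    (((hasDerivAt_id' a).const_mul (conj a)).const_sub 1) (by rwa [hconj])).congr_deriv ?_
  rw [hconj]
  field_simp
  ring

theorem mapsTo_ball_of_norm_lt_one {ψ : ℂ → ℂ} (hd : DifferentiableOn ℂ ψ (ball 0 1))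
    (hψ : MapsTo ψ (ball 0 1) (closedBall 0 1)) (h0 : ‖ψ 0‖ < 1) :
    MapsTo ψ (ball 0 1) (ball 0 1) := by
  intro z hz
  by_contra hz1
  have hmax : IsMaxOn (norm ∘ ψ) (ball 0 1) z := fun w hw =>
    (mem_closedBall_zero_iff.1 (hψ hw)).trans (by simpa using hz1)
  have h0z : ψ 0 = ψ z := Complex.eqOn_of_isPreconnected_of_isMaxOn_norm
    (convex_ball (0 : ℂ) 1).isPreconnected isOpen_ball hd hz hmax (mem_ball_self one_pos)
  exact hz1 (by rwa [mem_ball_zero_iff, ← h0z])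

theorem norm_deriv_le_one_sub_sq_norm {ψ : ℂ → ℂ} (hd : DifferentiableOn ℂ ψ (ball 0 1))
    (hψ : MapsTo ψ (ball 0 1) (closedBall 0 1)) : ‖deriv ψ 0‖ ≤ 1 - ‖ψ 0‖ ^ 2 := by
  -- If `‖ψ 0‖ < 1`, move `ψ 0` to `0` by a disk automorphism and apply the Schwarz lemma;
  -- if `‖ψ 0‖ = 1`, the maximum modulus principle makes `ψ` locally constant.
  have h0 : ‖ψ 0‖ ≤ 1 := by simpa using hψ (mem_ball_self one_pos)
  rcases h0.lt_or_eq with h0 | h0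
  · have hmaps := mapsTo_ball_of_norm_lt_one hd hψ h0
    have hχ : MapsTo (mobius (ψ 0) ∘ ψ) (ball 0 1) (closedBall (mobius (ψ 0) (ψ 0)) 1) :=
      fun z hz => by
        simpa [mobius_self] using (norm_mobius_lt_one h0 (by simpa using hmaps hz)).le
    have hψ0 : HasDerivAt ψ (deriv ψ 0) 0 :=
      (hd.differentiableAt (isOpen_ball.mem_nhds (mem_ball_self one_pos))).hasDerivAt
    have hderiv := ((hasDerivAt_mobius h0).comp 0 hψ0).deriv
    have := Complex.norm_deriv_le_one_of_mapsTo_ball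
      ((differentiableOn_mobius h0).comp hd hmaps) hχ one_pos
    have hnorm : ‖((1 - ‖ψ 0‖ ^ 2 : ℂ))⁻¹‖ = (1 - ‖ψ 0‖ ^ 2)⁻¹ := by
      rw [norm_inv, show (1 - ‖ψ 0‖ ^ 2 : ℂ) = ((1 - ‖ψ 0‖ ^ 2 : ℝ) : ℂ) by push_cast; rfl,
        Complex.norm_real, Real.norm_of_nonneg (by nlinarith [norm_nonneg (ψ 0)])]
    rw [hderiv, norm_mul, hnorm, inv_mul_le_iff₀ (by nlinarith [norm_nonneg (ψ 0)]),
      mul_one] at this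
    exact this
  · have hmax : IsLocalMax (norm ∘ ψ) 0 :=
      Filter.eventually_of_mem (ball_mem_nhds 0 one_pos) fun w hw => by
        simpa [h0] using hψ hw
    have hconst : ψ =ᶠ[𝓝 0] fun _ => ψ 0 := Complex.eventually_eq_of_isLocalMax_norm
      (hd.eventually_differentiableAt (ball_mem_nhds 0 one_pos)) hmax
    simp [hconst.deriv_eq, h0]

theorem IsPrimitiveRoot.geom_sum_pow_eq_ite {K : Type*} [Field K] {ζ : K} {m : ℕ}
    (hζ : IsPrimitiveRoot ζ m) (n : ℕ) :
    ∑ j ∈ range m, (ζ ^ n) ^ j = if m ∣ n then (m : K) else 0 := by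
  split_ifs with hdvd
  · simp [(hζ.pow_eq_one_iff_dvd n).2 hdvd]
  · have hne : ζ ^ n ≠ 1 := mt (hζ.pow_eq_one_iff_dvd n).1 hdvd
    rw [geom_sum_eq hne, ← pow_mul, mul_comm, pow_mul, hζ.pow_eq_one, one_pow, sub_self,
      zero_div]

namespace HasCoeffsOnBall

variable {ψ : ℂ → ℂ} {b : ℕ → ℂ}

theorem hasSum_average_rotations (h : HasCoeffsOnBall ψ b 1) {ζ : ℂ} {m : ℕ}
    (hζ : IsPrimitiveRoot ζ m) (hm : m ≠ 0) {z : ℂ} (hz : z ∈ ball (0 : ℂ) 1) :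
    HasSum (fun t => b (m * t) * (z ^ m) ^ t) ((m : ℂ)⁻¹ * ∑ j ∈ range m, ψ (ζ ^ j * z)) := by
  have hrot : ∀ j, ζ ^ j * z ∈ ball (0 : ℂ) 1 := fun j => by
    simpa [hζ.norm'_eq_one hm] using hz
  have hsum := (hasSum_sum (s := range m) fun j _ => h _ (hrot j)).mul_left (m : ℂ)⁻¹
  have hterm : ∀ n, (m : ℂ)⁻¹ * ∑ j ∈ range m, b n * (ζ ^ j * z) ^ n
      = if m ∣ n then b n * z ^ n else 0 := fun n => by
    have hrot_pow : ∀ j, b n * (ζ ^ j * z) ^ n = (ζ ^ n) ^ j * (b n * z ^ n) := fun j => by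
      rw [mul_pow, ← pow_mul, ← pow_mul, mul_comm j n]; ring
    simp_rw [hrot_pow, ← Finset.sum_mul, hζ.geom_sum_pow_eq_ite]
    split_ifs
    · field_simp
    · simp
  simp_rw [hterm] at hsum
  have hinj : Function.Injective (m * ·) := fun _ _ => (Nat.eq_of_mul_eq_mul_left (by omega) ·)
  refine (hinj.hasSum_iff fun n hn => if_neg fun ⟨t, ht⟩ => hn ⟨t, ht.symm⟩).2 hsum |>.congr_fun ?_
  intro t
  simp [pow_mul]

theorem exists_hasCoeffsOnBall_mul (h : HasCoeffsOnBall ψ b 1)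
    (hψ : MapsTo ψ (ball 0 1) (closedBall 0 1)) {m : ℕ} (hm : m ≠ 0) :
    ∃ G : ℂ → ℂ, HasCoeffsOnBall G (fun t => b (m * t)) 1 ∧
      MapsTo G (ball 0 1) (closedBall 0 1) := by
  have hζ := Complex.isPrimitiveRoot_exp m hm
  have hroot : ∀ w ∈ ball (0 : ℂ) 1, ∃ z ∈ ball (0 : ℂ) 1, z ^ m = w := fun w hw => by
    obtain ⟨z, rfl⟩ := IsAlgClosed.exists_pow_nat_eq w (Nat.pos_of_ne_zero hm)
    exact ⟨z, by simpa [norm_pow, pow_lt_one_iff_of_nonneg (norm_nonneg z) hm] using hw, rfl⟩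
  refine ⟨fun w => ∑' t, b (m * t) * w ^ t, fun w hw => ?_, fun w hw => ?_⟩
  · obtain ⟨z, hz, rfl⟩ := hroot w hw
    exact (h.hasSum_average_rotations hζ hm hz).summable.hasSum
  · obtain ⟨z, hz, rfl⟩ := hroot w hw
    rw [mem_closedBall_zero_iff]
    beta_reduce
    rw [(h.hasSum_average_rotations hζ hm hz).tsum_eq, norm_mul, norm_inv, Complex.norm_natCast]
    refine inv_mul_le_one_of_le₀ ((norm_sum_le _ _).trans ?_) (Nat.cast_nonneg m)
    refine (Finset.sum_le_card_nsmul _ _ 1 fun j _ => ?_).trans (by simp)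
    exact mem_closedBall_zero_iff.1 (hψ (by simpa [hζ.norm'_eq_one hm] using hz))

theorem norm_coeff_le_one_sub_sq (h : HasCoeffsOnBall ψ b 1)
    (hψ : MapsTo ψ (ball 0 1) (closedBall 0 1)) {m : ℕ} (hm : m ≠ 0) :
    ‖b m‖ ≤ 1 - ‖b 0‖ ^ 2 := by
  obtain ⟨G, hG, hGmaps⟩ := h.exists_hasCoeffsOnBall_mul hψ hm
  have := norm_deriv_le_one_sub_sq_norm hG.differentiableOn hGmaps
  rwa [← hG.coeff_zero one_pos, ← hG.coeff_one one_pos, mul_zero, mul_one] at this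

theorem tsum_norm_mul_pow_le_one (h : HasCoeffsOnBall ψ b 1)
    (hψ : MapsTo ψ (ball 0 1) (closedBall 0 1)) {r : ℝ} (hr0 : 0 ≤ r) (hr : r ≤ 1 / 3) :
    ∑' n, ‖b n‖ * r ^ n ≤ 1 := by
  have hr1 : r < 1 := by linarith
  set B := ‖b 0‖
  have hB0 : 0 ≤ B := norm_nonneg _
  have hB : B ≤ 1 := by simpa [B, h.coeff_zero one_pos] using hψ (mem_ball_self one_pos)
  have htail : ∑' n, ‖b (n + 1)‖ * r ^ (n + 1) ≤ (1 - B ^ 2) * r * (1 - r)⁻¹ :=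
    hasSum_le (fun n => by
        rw [pow_succ', mul_assoc]; gcongr; exact h.norm_coeff_le_one_sub_sq hψ n.succ_ne_zero)
      ((summable_nat_add_iff 1).2 (h.summable_norm_mul_pow hr0 hr1)).hasSum
      ((hasSum_geometric_of_lt_one hr0 hr1).mul_left _)
  have hratio : r * (1 - r)⁻¹ ≤ 1 / 2 := by
    rw [← div_eq_mul_inv, div_le_iff₀ (by linarith)]; linarith
  rw [(h.summable_norm_mul_pow hr0 hr1).tsum_eq_zero_add, pow_zero, mul_one]
  -- `B + (1 - B ^ 2) / 2 ≤ 1` is `(1 - B) ^ 2 ≥ 0`.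
  nlinarith [mul_le_mul_of_nonneg_left hratio (by nlinarith : 0 ≤ 1 - B ^ 2)]

end HasCoeffsOnBall

theorem HasSum.ite_lt_sub {M : Type*} [AddCommGroup M] [TopologicalSpace M]
    [IsTopologicalAddGroup M] {f : ℕ → M} {a : M} (h : HasSum f a) (k : ℕ) :
    HasSum (fun n => if n < k then 0 else f (n - k)) a := by
  rw [← hasSum_nat_add_iff' k, Finset.sum_eq_zero fun i hi => if_pos (mem_range.1 hi), sub_zero]
  simpa using h

theorem HasCoeffsOnBall.pow_mul {φ : ℂ → ℂ} {β : ℕ → ℂ} {ρ : ℝ} (h : HasCoeffsOnBall φ β ρ)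
    (k : ℕ) :
    HasCoeffsOnBall (fun z => z ^ k * φ z) (fun n => if n < k then 0 else β (n - k)) ρ :=
  fun z hz => ((h z hz).mul_left (z ^ k)).ite_lt_sub k |>.congr_fun fun n => by
    dsimp only
    split_ifs with hn
    · simp
    · rw [← mul_assoc, mul_comm _ (β _), mul_assoc, ← pow_add, Nat.add_sub_cancel' (not_lt.1 hn)]

theorem exists_hasCoeffsOnBall_pow_of_mapsTo {ω : ℂ → ℂ} (hω : DifferentiableOn ℂ ω (ball 0 1))
    (hω0 : ω 0 = 0) (hωmap : MapsTo ω (ball 0 1) (ball 0 1)) (k : ℕ) :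
    ∃ W : ℕ → ℂ, HasCoeffsOnBall (fun z => ω z ^ k) W 1 ∧
      ∀ s : ℝ, 0 ≤ s → s ≤ 1 / 3 → ∑' n, ‖W n‖ * s ^ n ≤ s ^ k := by
  set u := dslope ω 0
  have hu : DifferentiableOn ℂ u (ball 0 1) :=
    (differentiableOn_dslope (ball_mem_nhds 0 one_pos)).2 hω
  have hu1 : MapsTo (fun z => u z ^ k) (ball 0 1) (closedBall 0 1) := fun z hz => by
    have := Complex.norm_dslope_le_div_of_mapsTo_ball hω
      (by simpa [hω0] using hωmap.mono_right ball_subset_closedBall) hz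
    simpa using pow_le_one₀ (norm_nonneg _) (this.trans_eq (div_one 1))
  have hωu : ∀ z, ω z ^ k = z ^ k * u z ^ k := fun z => by
    have := sub_smul_dslope ω 0 z
    rw [hω0, sub_zero, sub_zero, smul_eq_mul] at this
    rw [← this, mul_pow]
  obtain ⟨β, hβ⟩ : ∃ β, HasCoeffsOnBall (fun z => u z ^ k) β 1 := ⟨_, (hu.pow k).hasCoeffsOnBall⟩
  refine ⟨_, (hβ.pow_mul k).congr fun z _ => hωu z, fun s hs0 hs => ?_⟩
  have hs1 : s < 1 := by linarith
  have hW : HasSum (fun n => ‖if n < k then 0 else β (n - k)‖ * s ^ n)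
      (s ^ k * ∑' n, ‖β n‖ * s ^ n) :=
    ((hβ.summable_norm_mul_pow hs0 hs1).hasSum.mul_left (s ^ k)).ite_lt_sub k |>.congr_fun
      fun n => by
        split_ifs with hn
        · simp
        · rw [← mul_assoc, mul_comm _ ‖_‖, mul_assoc, ← pow_add, Nat.add_sub_cancel' (not_lt.1 hn)]
  rw [hW.tsum_eq]
  exact mul_le_of_le_one_right (by positivity) (hβ.tsum_norm_mul_pow_le_one hu1 hs0 hs)

section DoubleSeries

variable {a : ℕ → ℂ} {W : ℕ → ℕ → ℂ} {s : ℝ}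

theorem summable_norm_mul_norm_mul_pow (hs : 0 ≤ s) (ha : Summable fun k => ‖a k‖ * s ^ k)
    (hW : ∀ k, Summable fun n => ‖W k n‖ * s ^ n) (hWle : ∀ k, ∑' n, ‖W k n‖ * s ^ n ≤ s ^ k) :
    Summable fun p : ℕ × ℕ => ‖a p.1‖ * (‖W p.1 p.2‖ * s ^ p.2) := by
  have hnonneg : ∀ k n, 0 ≤ ‖W k n‖ * s ^ n := fun k n => by positivity
  rw [summable_prod_of_nonneg fun p => mul_nonneg (norm_nonneg _) (hnonneg _ _)]
  refine ⟨fun k => (hW k).mul_left ‖a k‖, ha.of_nonneg_of_le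
    (fun k => tsum_nonneg fun n => mul_nonneg (norm_nonneg _) (hnonneg k n)) fun k => ?_⟩
  dsimp only
  rw [tsum_mul_left]
  exact mul_le_mul_of_nonneg_left (hWle k) (norm_nonneg _)

theorem tsum_norm_tsum_mul_mul_pow_le (hs : 0 ≤ s) (ha : Summable fun k => ‖a k‖ * s ^ k)
    (hW : ∀ k, Summable fun n => ‖W k n‖ * s ^ n) (hWle : ∀ k, ∑' n, ‖W k n‖ * s ^ n ≤ s ^ k) :
    ∑' n, ‖∑' k, a k * W k n‖ * s ^ n ≤ ∑' k, ‖a k‖ * s ^ k := by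
  have hF := summable_norm_mul_norm_mul_pow hs ha hW hWle
  have hterm : ∀ n, ‖∑' k, a k * W k n‖ * s ^ n ≤ ∑' k, ‖a k‖ * (‖W k n‖ * s ^ n) := fun n => by
    have hnorm : ∀ x : ℂ, ‖x * (s : ℂ) ^ n‖ = ‖x‖ * s ^ n := fun x => by
      rw [norm_mul, norm_pow, Complex.norm_real, Real.norm_of_nonneg hs]
    have hnorm' : ∀ k, ‖a k * W k n * (s : ℂ) ^ n‖ = ‖a k‖ * (‖W k n‖ * s ^ n) := fun k => by
      rw [hnorm, norm_mul, mul_assoc]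
    rw [← hnorm, ← tsum_mul_right, ← tsum_congr hnorm']
    exact norm_tsum_le_tsum_norm ((hF.prod_symm.prod_factor n).congr fun k => (hnorm' k).symm)
  have hcols : Summable fun n => ∑' k, ‖a k‖ * (‖W k n‖ * s ^ n) := hF.prod_symm.prod
  have hrows : Summable fun k => ‖a k‖ * ∑' n, ‖W k n‖ * s ^ n := by
    simpa only [tsum_mul_left] using hF.prod
  calc ∑' n, ‖∑' k, a k * W k n‖ * s ^ n
      ≤ ∑' n, ∑' k, ‖a k‖ * (‖W k n‖ * s ^ n) :=
        Summable.tsum_le_tsum hterm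
          (hcols.of_nonneg_of_le (fun n => mul_nonneg (norm_nonneg _) (pow_nonneg hs n)) hterm)
          hcols
    _ = ∑' k, ‖a k‖ * ∑' n, ‖W k n‖ * s ^ n := by
        rw [Summable.tsum_comm (f := fun k n => ‖a k‖ * (‖W k n‖ * s ^ n)) hF]
        simp only [tsum_mul_left]
    _ ≤ ∑' k, ‖a k‖ * s ^ k :=
        Summable.tsum_le_tsum (fun k => mul_le_mul_of_nonneg_left (hWle k) (norm_nonneg _))
          hrows ha

end DoubleSeries

theorem HasCoeffsOnBall.comp {f ω : ℂ → ℂ} {a : ℕ → ℂ} {W : ℕ → ℕ → ℂ} {ρ : ℝ}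
    (hf : HasCoeffsOnBall f a 1) (hρ : ρ ≤ 1) (hωmap : MapsTo ω (ball 0 ρ) (ball 0 1))
    (hW : ∀ k, HasCoeffsOnBall (fun z => ω z ^ k) (W k) ρ)
    (hWle : ∀ k (s : ℝ), 0 ≤ s → s < ρ → ∑' n, ‖W k n‖ * s ^ n ≤ s ^ k) :
    HasCoeffsOnBall (fun z => f (ω z)) (fun n => ∑' k, a k * W k n) ρ := by
  intro z hz
  have hs : ‖z‖ < ρ := mem_ball_zero_iff.1 hz
  have hF := summable_norm_mul_norm_mul_pow (norm_nonneg z)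
    (hf.summable_norm_mul_pow (norm_nonneg z) (hs.trans_le hρ))
    (fun k => (hW k).summable_norm_mul_pow (norm_nonneg z) hs)
    (fun k => hWle k _ (norm_nonneg z) hs)
  have hF' : Summable fun p : ℕ × ℕ => a p.1 * W p.1 p.2 * z ^ p.2 :=
    Summable.of_norm (hF.congr fun p => by simp only [norm_mul, norm_pow, mul_assoc])
  have hrow : ∀ k, ∑' n, a k * W k n * z ^ n = a k * ω z ^ k := fun k => by
    simp_rw [mul_assoc]; exact ((hW k z hz).mul_left (a k)).tsum_eq
  have hsum : HasSum (fun n => ∑' k, a k * W k n * z ^ n) (∑' k, ∑' n, a k * W k n * z ^ n) := by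
    rw [← Summable.tsum_comm (f := fun k n => a k * W k n * z ^ n) hF']
    exact hF'.prod_symm.prod.hasSum
  rw [tsum_congr hrow, (hf _ (hωmap hz)).tsum_eq] at hsum
  simpa only [tsum_mul_right] using hsum

theorem stmt_12 (f g ω : ℂ → ℂ) (a c : ℕ → ℂ)
    (hf : ∀ z ∈ Metric.ball (0:ℂ) 1, HasSum (fun n : ℕ => a n * z ^ n) (f z))
    (hg : ∀ z ∈ Metric.ball (0:ℂ) 1, HasSum (fun n : ℕ => c n * z ^ n) (g z))
    (hω : DifferentiableOn ℂ ω (Metric.ball 0 1))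
    (hω0 : ω 0 = 0)
    (hωmap : Set.MapsTo ω (Metric.ball (0:ℂ) 1) (Metric.ball (0:ℂ) 1))
    (hsub : ∀ z ∈ Metric.ball (0:ℂ) 1, g z = f (ω z)) :
    ∀ r : ℝ, 0 ≤ r → r ≤ 1/3 →
      (∑' n : ℕ, ‖c n‖ * r ^ n) ≤ ∑' n : ℕ, ‖a n‖ * r ^ n := by
  intro r hr0 hr3
  have hf : HasCoeffsOnBall f a 1 := hf
  have hg : HasCoeffsOnBall g c 1 := hg
  choose W hW hWle using exists_hasCoeffsOnBall_pow_of_mapsTo hω hω0 hωmap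
  have hthird : ball (0 : ℂ) (1 / 3) ⊆ ball 0 1 := ball_subset_ball (by norm_num)
  have hcomp : HasCoeffsOnBall g (fun n => ∑' k, a k * W k n) (1 / 3) :=
    (hf.comp (by norm_num) (hωmap.mono_left hthird) (fun k => (hW k).mono (by norm_num))
      fun k s hs0 hs => hWle k s hs0 hs.le).congr fun z hz => hsub z (hthird hz)
  rw [hg.unique hcomp one_pos (by norm_num)]
  exact tsum_norm_tsum_mul_mul_pow_le hr0 (hf.summable_norm_mul_pow hr0 (by linarith))
    (fun k => (hW k).summable_norm_mul_pow hr0 (by linarith)) fun k => hWle k r hr0 hr3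
end
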